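/- arXiv:2107.12834 — 2 statements merged into one kernel-verified Lean document; each statement's English description precedes it below -/
import Mathlib

section
/- Let f : ℝ⁴ → ℂ be a Schwartz function and e ∈ ℝ⁴, e ≠ 0. Then the directional derivative of I_e f along e satisfies (e·∂)(I_e f)(x) = -f(x) for all x, where (e·∂)g(x) = Σ_μ e^μ ∂_μ g(x). -/
/-!
Uniformly for `y` near `x`, the Schwartz decay of `f` and of its derivative along the line
`s ↦ y + s • e` is dominated by `C (1 + s²)⁻¹`, because `|s| ‖e‖ ≤ ‖y‖ + ‖y + s • e‖`. This
justifies differentiating under the integral sign, so `(e·∂) I_e f (x) = ∫₀^∞ d/ds f(x + s e) ds`,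
which by the fundamental theorem of calculus is `lim_{s→∞} f(x + s e) - f x = -f x`.
-/

open MeasureTheory Set Metric Filter

section StringIntegral

variable {E F : Type*} [NormedAddCommGroup E] [NormedSpace ℝ E]
  [NormedAddCommGroup F] [NormedSpace ℝ F] {e : E}

lemma one_add_abs_le_mul_one_add_norm_add_smul (he : e ≠ 0) {x y : E}
    (hy : y ∈ closedBall x 1) (s : ℝ) :
    1 + |s| ≤ (1 + (2 + ‖x‖) / ‖e‖) * (1 + ‖y + s • e‖) := by
  have hc : 0 < ‖e‖ := norm_pos_iff.mpr he
  have hy : ‖y‖ ≤ 1 + ‖x‖ := by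
    have := norm_le_norm_add_norm_sub' y x
    linarith [mem_closedBall_iff_norm.mp hy]
  have hs : |s| * ‖e‖ ≤ ‖y + s • e‖ + ‖y‖ := by
    simpa [norm_smul] using norm_sub_le (y + s • e) y
  rw [one_add_div hc.ne', div_mul_eq_mul_div, le_div_iff₀ hc]
  nlinarith [norm_nonneg (y + s • e), norm_nonneg x]

theorem SchwartzMap.exists_norm_comp_add_smul_le (f : SchwartzMap E F) (he : e ≠ 0) (x : E) :
    ∃ C, ∀ y ∈ closedBall x 1, ∀ s : ℝ, ‖f (y + s • e)‖ ≤ C * (1 + s ^ 2)⁻¹ := by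
  set A := 1 + (2 + ‖x‖) / ‖e‖
  set C₀ := 2 ^ 2 * (Finset.Iic (2, 0)).sup (fun m => SchwartzMap.seminorm ℝ m.1 m.2) f
  have hdecay (z : E) : (1 + ‖z‖) ^ 2 * ‖f z‖ ≤ C₀ := by
    simpa using f.one_add_le_sup_seminorm_apply (𝕜 := ℝ) (m := (2, 0)) le_rfl le_rfl z
  refine ⟨A ^ 2 * C₀, fun y hy s => ?_⟩
  have hline : 1 + s ^ 2 ≤ A ^ 2 * (1 + ‖y + s • e‖) ^ 2 := calc
    1 + s ^ 2 ≤ (1 + |s|) ^ 2 := by nlinarith [sq_abs s, abs_nonneg s]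
    _ ≤ (A * (1 + ‖y + s • e‖)) ^ 2 := by
      gcongr; exact one_add_abs_le_mul_one_add_norm_add_smul he hy s
    _ = A ^ 2 * (1 + ‖y + s • e‖) ^ 2 := by ring
  rw [← div_eq_mul_inv, le_div_iff₀ (by positivity)]
  calc ‖f (y + s • e)‖ * (1 + s ^ 2)
      ≤ ‖f (y + s • e)‖ * (A ^ 2 * (1 + ‖y + s • e‖) ^ 2) := by gcongr
    _ = A ^ 2 * ((1 + ‖y + s • e‖) ^ 2 * ‖f (y + s • e)‖) := by ring
    _ ≤ A ^ 2 * C₀ := by gcongr; exact hdecay _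

theorem SchwartzMap.integrable_comp_add_smul (f : SchwartzMap E F) (he : e ≠ 0) (x : E) :
    Integrable fun s : ℝ => f (x + s • e) := by
  obtain ⟨C, hC⟩ := f.exists_norm_comp_add_smul_le he x
  refine (integrable_inv_one_add_sq.const_mul C).mono'
    (by fun_prop : Continuous fun s : ℝ => f (x + s • e)).aestronglyMeasurable ?_
  exact .of_forall (hC x (mem_closedBall_self zero_le_one))

theorem SchwartzMap.hasFDerivAt_setIntegral_comp_add_smul [CompleteSpace F]
    (f : SchwartzMap E F) (he : e ≠ 0) (S : Set ℝ) (x : E) :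
    HasFDerivAt (fun y => ∫ s in S, f (y + s • e)) (∫ s in S, fderiv ℝ f (x + s • e)) x := by
  obtain ⟨C, hC⟩ := (SchwartzMap.fderivCLM ℝ E F f).exists_norm_comp_add_smul_le he x
  simp only [SchwartzMap.fderivCLM_apply] at hC
  refine hasFDerivAt_integral_of_dominated_of_fderiv_le (closedBall_mem_nhds x one_pos)
    (.of_forall fun y => (by fun_prop : Continuous fun s : ℝ => f (y + s • e)).aestronglyMeasurable)
    ((f.integrable_comp_add_smul he x).restrict)
    ?_ (.of_forall fun s y hy => hC y hy s)
    ((integrable_inv_one_add_sq.const_mul C).restrict)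
    (.of_forall fun s y _ => ?_)
  · exact ((SchwartzMap.fderivCLM ℝ E F f).integrable_comp_add_smul he x).restrict
      |>.aestronglyMeasurable
  · exact (f.hasFDerivAt (y + s • e)).comp y ((hasFDerivAt_id y).add_const (s • e))

theorem SchwartzMap.integral_Ioi_fderiv_comp_add_smul_apply [CompleteSpace F]
    (f : SchwartzMap E F) (he : e ≠ 0) (x : E) :
    ∫ s in Ioi (0 : ℝ), fderiv ℝ f (x + s • e) e = -f x := by
  have hderiv (s : ℝ) : HasDerivAt (fun s : ℝ => f (x + s • e)) (fderiv ℝ f (x + s • e) e) s := by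
    have hline : HasDerivAt (fun s : ℝ => x + s • e) e s := by
      simpa using ((hasDerivAt_id s).smul_const e).const_add x
    exact (f.hasFDerivAt (x + s • e)).comp_hasDerivAt s hline
  have hint : Integrable fun s : ℝ => fderiv ℝ f (x + s • e) e :=
    (LineDeriv.lineDerivOp e f).integrable_comp_add_smul he x
  have hlim : Tendsto (fun s : ℝ => f (x + s • e)) atTop (nhds 0) := by
    obtain ⟨C, hC⟩ := f.exists_norm_comp_add_smul_le he x
    have hdecay : Tendsto (fun s : ℝ => C * (1 + s ^ 2)⁻¹) atTop (nhds 0) := by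
      simpa using (tendsto_inv_atTop_zero.comp
        (tendsto_atTop_add_const_left _ 1 (tendsto_pow_atTop two_ne_zero))).const_mul C
    exact squeeze_zero_norm (hC x (mem_closedBall_self zero_le_one)) hdecay
  simpa using
    integral_Ioi_of_hasDerivAt_of_tendsto' (a := 0) (fun s _ => hderiv s) hint.integrableOn hlim

end StringIntegral

/-- For a Schwartz function `f` on `ℝ⁴` and `e ≠ 0`, the directional derivative of the
string integral `I_e f(x) = ∫₀^∞ f(x+se) ds` along `e` satisfies `(e·∂)(I_e f)(x) = -f x`. -/
theorem string_integral_directional_derivative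
    (f : SchwartzMap (EuclideanSpace ℝ (Fin 4)) ℂ)
    (e : EuclideanSpace ℝ (Fin 4)) (he : e ≠ 0)
    (x : EuclideanSpace ℝ (Fin 4)) :
    fderiv ℝ (fun y : EuclideanSpace ℝ (Fin 4) =>
      ∫ s in Set.Ioi (0:ℝ), f (y + s • e)) x e = -f x := by
  have hint : IntegrableOn (fun s : ℝ => fderiv ℝ f (x + s • e)) (Ioi 0) :=
    ((SchwartzMap.fderivCLM ℝ _ ℂ f).integrable_comp_add_smul he x).integrableOn
  rw [(f.hasFDerivAt_setIntegral_comp_add_smul he _ x).fderiv,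
    ContinuousLinearMap.integral_apply hint, f.integral_Ioi_fderiv_comp_add_smul_apply he x]
end

section
/- For φ a Schwartz function on ℝ, the limit lim_{ε→0⁺} ∫_ℝ φ(t)/(t - iε) dt exists and equals p.v.∫_ℝ φ(t)/t dt + iπ φ(0), where p.v. denotes the Cauchy principal value. In particular t ↦ [t - i0]^{-1} defines a tempered distribution on ℝ. -/
open MeasureTheory Filter Complex Topology

/-! Since `1/(t - iε) = t/(t² + ε²) + i ε/(t² + ε²)`, the limit splits into two parts.

Substituting `t = εs` turns `∫ ε φ(t)/(t² + ε²) dt` into `∫ φ(εs)/(1 + s²) ds`, which tends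
to `π φ(0)` by dominated convergence.

The conjugate kernel `t/(t² + ε²)` and the truncated kernel `1_{|t| ≥ δ}/t` are both odd, so
pairing either of them with `φ` only sees `(φ(t) - φ(-t))/2`. Each pairing can therefore be
written as `∫ m(t) (φ(t) - φ(-t))/(2t) dt` with `|m| ≤ 1` and `m → 1` away from `0`. Because
`φ` is Lipschitz and integrable, `(φ(t) - φ(-t))/(2t)` is integrable, and dominated convergence
sends both pairings to its integral. -/

theorem SchwartzMap.lipschitzWith {F : Type*} [NormedAddCommGroup F] [NormedSpace ℝ F]
    (f : SchwartzMap ℝ F) :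
    LipschitzWith ‖(SchwartzMap.derivCLM ℝ F f).toBoundedContinuousFunction‖₊ f :=
  lipschitzWith_of_nnnorm_deriv_le f.differentiable fun x => by
    simpa using (SchwartzMap.derivCLM ℝ F f).toBoundedContinuousFunction.nnnorm_coe_le_nnnorm x

theorem tendsto_integral_mul_of_tendsto_one {α ι : Type*} [MeasurableSpace α] {μ : Measure α}
    {l : Filter ι} [l.IsCountablyGenerated] {m : ι → α → ℂ} {ψ : α → ℂ} (hψ : Integrable ψ μ)
    (hm : ∀ i, AEStronglyMeasurable (m i) μ) (hm_le : ∀ i a, ‖m i a‖ ≤ 1)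
    (hm_lim : ∀ᵐ a ∂μ, Tendsto (fun i => m i a) l (𝓝 1)) :
    Tendsto (fun i => ∫ a, m i a * ψ a ∂μ) l (𝓝 (∫ a, ψ a ∂μ)) := by
  refine tendsto_integral_filter_of_dominated_convergence (fun a => ‖ψ a‖)
    (.of_forall fun i => (hm i).mul hψ.aestronglyMeasurable) (.of_forall fun i => ?_) hψ.norm ?_
  · refine ae_of_all _ fun a => ?_
    rw [norm_mul]
    exact mul_le_of_le_one_left (norm_nonneg _) (hm_le i a)
  · filter_upwards [hm_lim] with a ha
    simpa using ha.mul_const (ψ a)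

theorem ae_ne_zero_real : ∀ᵐ t : ℝ, t ≠ 0 := compl_mem_ae_iff.2 (measure_singleton 0)

noncomputable section

namespace SokhotskiPlemelj

def pvIntegrand (φ : ℝ → ℂ) (t : ℝ) : ℂ := (φ t - φ (-t)) / (2 * t)

theorem integral_mul_eq_integral_mul_pvIntegrand {φ k : ℝ → ℂ} (hk : ∀ t, k (-t) = -k t)
    (hint : Integrable fun t => k t * φ t) :
    ∫ t, k t * φ t = ∫ t, t * k t * pvIntegrand φ t := by
  have hint' : Integrable fun t => k t * φ (-t) := by
    simpa [hk] using hint.comp_neg.neg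
  have hneg : ∫ t, k t * φ (-t) = -∫ t, k t * φ t := by
    rw [← integral_neg, ← integral_neg_eq_self (fun t => k t * φ (-t))]
    simp [hk]
  calc ∫ t, k t * φ t = ((∫ t, k t * φ t) - ∫ t, k t * φ (-t)) / 2 := by rw [hneg]; ring
    _ = ∫ t, (k t * φ t - k t * φ (-t)) / 2 := by rw [integral_div, integral_sub hint hint']
    _ = ∫ t, t * k t * pvIntegrand φ t := by
      congr 1 with t
      rcases eq_or_ne t 0 with rfl | ht
      · have hk0 : k 0 = 0 := self_eq_neg.mp (by simpa using hk 0)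
        simp [hk0]
      · have : (t : ℂ) ≠ 0 := by exact_mod_cast ht
        rw [pvIntegrand]
        field_simp

theorem norm_pvIntegrand_le_of_lipschitzWith {φ : ℝ → ℂ} {K : NNReal} (hφ : LipschitzWith K φ)
    (t : ℝ) : ‖pvIntegrand φ t‖ ≤ K := by
  rcases eq_or_ne t 0 with rfl | ht
  · simp [pvIntegrand]
  have hd : ‖φ t - φ (-t)‖ ≤ K * (2 * |t|) := by
    simpa [← dist_eq_norm, Real.dist_eq, ← two_mul, abs_mul] using hφ.dist_le_mul t (-t)
  rw [pvIntegrand, norm_div, div_le_iff₀ (by simpa using ht)]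
  simpa using hd

theorem norm_pvIntegrand_le_of_one_le_abs (φ : ℝ → ℂ) {t : ℝ} (ht : 1 ≤ |t|) :
    ‖pvIntegrand φ t‖ ≤ ‖φ t‖ + ‖φ (-t)‖ := by
  rw [pvIntegrand, norm_div]
  refine div_le_of_le_mul₀ (norm_nonneg _) (by positivity) ?_
  calc ‖φ t - φ (-t)‖ ≤ ‖φ t‖ + ‖φ (-t)‖ := norm_sub_le _ _
    _ ≤ (‖φ t‖ + ‖φ (-t)‖) * ‖(2 * t : ℂ)‖ := by
      refine le_mul_of_one_le_right (by positivity) ?_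
      simp only [norm_mul, Complex.norm_ofNat, Complex.norm_real, Real.norm_eq_abs]
      linarith

theorem integrable_pvIntegrand {φ : ℝ → ℂ} {K : NNReal} (hφ : LipschitzWith K φ)
    (hφi : Integrable φ) : Integrable (pvIntegrand φ) := by
  set s : Set ℝ := Set.Icc (-1) 1
  have hmeas : Measurable (pvIntegrand φ) := by
    have := hφ.continuous.measurable
    unfold pvIntegrand
    fun_prop
  refine Integrable.mono' (g := fun t => s.indicator (fun _ => (K : ℝ)) t + (‖φ t‖ + ‖φ (-t)‖))
    (((integrableOn_const (by simp)).integrable_indicator measurableSet_Icc).add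
      (hφi.norm.add hφi.comp_neg.norm)) hmeas.aestronglyMeasurable (ae_of_all _ fun t => ?_)
  by_cases ht : t ∈ s
  · rw [Set.indicator_of_mem ht]
    linarith [norm_pvIntegrand_le_of_lipschitzWith hφ t, norm_nonneg (φ t), norm_nonneg (φ (-t))]
  · rw [Set.indicator_of_notMem ht, zero_add]
    refine norm_pvIntegrand_le_of_one_le_abs φ ?_
    simp only [s, Set.mem_Icc, not_and_or, not_le] at ht
    rcases ht with h | h
    · rw [abs_of_neg (by linarith)]; linarith
    · rw [abs_of_pos (by linarith)]; linarith

theorem setIntegral_abs_ge_div_eq {φ : ℝ → ℂ} (hφ : Integrable φ) {δ : ℝ} (hδ : 0 < δ) :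
    ∫ t in {t : ℝ | δ ≤ |t|}, φ t / t
      = ∫ t, {t : ℝ | δ ≤ |t|}.indicator (fun _ => (1 : ℂ)) t * pvIntegrand φ t := by
  set S := {t : ℝ | δ ≤ |t|}
  have hS : MeasurableSet S := measurableSet_le measurable_const continuous_abs.measurable
  have hS_neg : ∀ t, -t ∈ S ↔ t ∈ S := by simp [S]
  have hk_odd : ∀ t, S.indicator (fun t : ℝ => (t : ℂ)⁻¹) (-t)
      = -S.indicator (fun t : ℝ => (t : ℂ)⁻¹) t := by
    intro t
    by_cases ht : t ∈ S
    · rw [Set.indicator_of_mem ((hS_neg t).2 ht), Set.indicator_of_mem ht, ofReal_neg, inv_neg]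
    · rw [Set.indicator_of_notMem (mt (hS_neg t).1 ht), Set.indicator_of_notMem ht, neg_zero]
  have hk_le : ∀ t, ‖S.indicator (fun t : ℝ => (t : ℂ)⁻¹) t‖ ≤ δ⁻¹ := by
    intro t
    by_cases ht : t ∈ S
    · rw [Set.indicator_of_mem ht, norm_inv, Complex.norm_real, Real.norm_eq_abs]
      exact inv_anti₀ hδ ht
    · rw [Set.indicator_of_notMem ht, norm_zero]
      positivity
  have hk_meas : Measurable (S.indicator fun t : ℝ => (t : ℂ)⁻¹) :=
    (by fun_prop : Measurable fun t : ℝ => (t : ℂ)⁻¹).indicator hS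
  rw [← integral_indicator hS]
  calc ∫ t, S.indicator (fun t => φ t / t) t
        = ∫ t, S.indicator (fun t : ℝ => (t : ℂ)⁻¹) t * φ t := by
        congr 1 with t
        by_cases ht : t ∈ S
        · simp only [Set.indicator_of_mem ht, div_eq_inv_mul]
        · simp only [Set.indicator_of_notMem ht, zero_mul]
    _ = ∫ t, t * S.indicator (fun t : ℝ => (t : ℂ)⁻¹) t * pvIntegrand φ t :=
        integral_mul_eq_integral_mul_pvIntegrand hk_odd
          (hφ.bdd_mul hk_meas.aestronglyMeasurable (ae_of_all _ hk_le))
    _ = _ := by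
        congr 1 with t
        by_cases ht : t ∈ S
        · have ht0 : (t : ℂ) ≠ 0 := ofReal_ne_zero.mpr (abs_pos.mp (hδ.trans_le ht))
          simp only [Set.indicator_of_mem ht, mul_inv_cancel₀ ht0]
        · simp only [Set.indicator_of_notMem ht, mul_zero]

theorem tendsto_setIntegral_abs_ge_div {φ : ℝ → ℂ} (hφ : Integrable φ)
    (hψ : Integrable (pvIntegrand φ)) :
    Tendsto (fun δ : ℝ => ∫ t in {t : ℝ | δ ≤ |t|}, φ t / t) (𝓝[>] 0)
      (𝓝 (∫ t, pvIntegrand φ t)) := by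
  refine (tendsto_integral_mul_of_tendsto_one hψ (fun δ => ?_) (fun δ t => ?_) ?_).congr'
    (eventually_mem_nhdsWithin.mono fun δ hδ => (setIntegral_abs_ge_div_eq hφ hδ).symm)
  · exact (measurable_const.indicator
      (measurableSet_le measurable_const continuous_abs.measurable)).aestronglyMeasurable
  · exact (norm_indicator_le_norm_self _ t).trans norm_one.le
  · filter_upwards [ae_ne_zero_real] with t ht
    refine tendsto_const_nhds.congr' ?_
    filter_upwards [(tendsto_id.eventually_lt_const (abs_pos.mpr ht)).filter_mono
      nhdsWithin_le_nhds] with δ hδ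
    exact (Set.indicator_of_mem (show t ∈ {t : ℝ | δ ≤ |t|} from hδ.le) fun _ => (1 : ℂ)).symm

-- The Poisson kernel of the upper half-plane and its conjugate, without the factor `1/π`.
def poissonKernel (ε t : ℝ) : ℝ := ε / (t ^ 2 + ε ^ 2)

def conjPoissonKernel (ε t : ℝ) : ℝ := t / (t ^ 2 + ε ^ 2)

theorem inv_ofReal_sub_mul_I {ε : ℝ} (hε : ε ≠ 0) (t : ℝ) :
    ((t : ℂ) - ε * I)⁻¹ = conjPoissonKernel ε t + I * poissonKernel ε t := by
  have hne : (t : ℂ) - ε * I ≠ 0 := by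
    intro h
    exact hε (by simpa using congrArg Complex.im h)
  have hpos : ((t ^ 2 + ε ^ 2 : ℝ) : ℂ) ≠ 0 := by
    exact_mod_cast (by positivity : t ^ 2 + ε ^ 2 ≠ 0)
  simp only [conjPoissonKernel, poissonKernel]
  push_cast at hpos ⊢
  field_simp
  ring_nf
  rw [I_sq]
  ring

theorem abs_conjPoissonKernel_le {ε : ℝ} (hε : 0 < ε) (t : ℝ) :
    |conjPoissonKernel ε t| ≤ ε⁻¹ := by
  rw [conjPoissonKernel, abs_div, abs_of_pos (by positivity : 0 < t ^ 2 + ε ^ 2),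
    div_le_iff₀ (by positivity), inv_mul_eq_div, le_div_iff₀ hε]
  nlinarith [sq_nonneg (|t| - ε), sq_abs t]

theorem abs_poissonKernel_le {ε : ℝ} (hε : 0 < ε) (t : ℝ) : |poissonKernel ε t| ≤ ε⁻¹ := by
  rw [poissonKernel, abs_div, abs_of_pos (by positivity : 0 < t ^ 2 + ε ^ 2), abs_of_pos hε,
    div_le_iff₀ (by positivity), inv_mul_eq_div, le_div_iff₀ hε]
  nlinarith [sq_nonneg t]

theorem measurable_conjPoissonKernel (ε : ℝ) : Measurable (conjPoissonKernel ε) := by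
  unfold conjPoissonKernel
  fun_prop

theorem measurable_poissonKernel (ε : ℝ) : Measurable (poissonKernel ε) := by
  unfold poissonKernel
  fun_prop

theorem integrable_conjPoissonKernel_mul {φ : ℝ → ℂ} (hφ : Integrable φ) {ε : ℝ}
    (hε : 0 < ε) : Integrable fun t => (conjPoissonKernel ε t : ℂ) * φ t :=
  hφ.bdd_mul (c := ε⁻¹) (measurable_conjPoissonKernel ε).complex_ofReal.aestronglyMeasurable
    (ae_of_all _ fun t => by simpa using abs_conjPoissonKernel_le hε t)

theorem integrable_poissonKernel_mul {φ : ℝ → ℂ} (hφ : Integrable φ) {ε : ℝ}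
    (hε : 0 < ε) : Integrable fun t => (poissonKernel ε t : ℂ) * φ t :=
  hφ.bdd_mul (c := ε⁻¹) (measurable_poissonKernel ε).complex_ofReal.aestronglyMeasurable
    (ae_of_all _ fun t => by simpa using abs_poissonKernel_le hε t)

theorem integral_div_ofReal_sub_mul_I {φ : ℝ → ℂ} (hφ : Integrable φ) {ε : ℝ} (hε : 0 < ε) :
    ∫ t, φ t / ((t : ℂ) - ε * I)
      = (∫ t, conjPoissonKernel ε t * φ t) + I * ∫ t, poissonKernel ε t * φ t := by
  rw [← integral_const_mul, ← integral_add (integrable_conjPoissonKernel_mul hφ hε)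
    ((integrable_poissonKernel_mul hφ hε).const_mul I)]
  congr 1 with t
  rw [div_eq_inv_mul, inv_ofReal_sub_mul_I hε.ne']
  ring

theorem tendsto_integral_conjPoissonKernel_mul {φ : ℝ → ℂ} (hφ : Integrable φ)
    (hψ : Integrable (pvIntegrand φ)) :
    Tendsto (fun ε : ℝ => ∫ t, conjPoissonKernel ε t * φ t) (𝓝[>] 0)
      (𝓝 (∫ t, pvIntegrand φ t)) := by
  have hkernel : ∀ ε t : ℝ,
      t * (conjPoissonKernel ε t : ℂ) = ((t ^ 2 / (t ^ 2 + ε ^ 2) : ℝ) : ℂ) := by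
    intro ε t
    rw [conjPoissonKernel]
    push_cast
    ring
  refine (tendsto_integral_mul_of_tendsto_one
    (m := fun ε t => ((t ^ 2 / (t ^ 2 + ε ^ 2) : ℝ) : ℂ)) hψ (fun ε => ?_) (fun ε t => ?_)
    ?_).congr' ?_
  · exact (by fun_prop : Measurable fun t : ℝ =>
      ((t ^ 2 / (t ^ 2 + ε ^ 2) : ℝ) : ℂ)).aestronglyMeasurable
  · rw [Complex.norm_real, Real.norm_eq_abs, abs_of_nonneg (by positivity)]
    exact div_le_one_of_le₀ (by nlinarith [sq_nonneg ε]) (by positivity)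
  · filter_upwards [ae_ne_zero_real] with t ht
    have hlim : Tendsto (fun ε : ℝ => t ^ 2 / (t ^ 2 + ε ^ 2)) (𝓝 0) (𝓝 1) := by
      refine (continuous_const.div (by fun_prop) fun ε => ?_).tendsto' 0 1 ?_
      · positivity
      · simp [ht]
    simpa using (hlim.ofReal).mono_left nhdsWithin_le_nhds
  · filter_upwards [self_mem_nhdsWithin] with ε (hε : 0 < ε)
    rw [integral_mul_eq_integral_mul_pvIntegrand (fun t => by simp [conjPoissonKernel, neg_div])
      (integrable_conjPoissonKernel_mul hφ hε)]
    simp only [hkernel]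

theorem integral_poissonKernel_mul_eq {φ : ℝ → ℂ} {ε : ℝ} (hε : 0 < ε) :
    ∫ t, poissonKernel ε t * φ t = ∫ s, ((1 + s ^ 2)⁻¹ : ℝ) * φ (ε * s) := by
  have h := Measure.integral_comp_mul_left (fun t => (poissonKernel ε t : ℂ) * φ t) ε
  rw [abs_of_pos (inv_pos.2 hε)] at h
  calc ∫ t, poissonKernel ε t * φ t = ε • ∫ s, poissonKernel ε (ε * s) * φ (ε * s) := by
        rw [h, smul_smul, mul_inv_cancel₀ hε.ne', one_smul]
    _ = ∫ s, ε • (poissonKernel ε (ε * s) * φ (ε * s)) := (integral_smul _ _).symm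
    _ = _ := by
        congr 1 with s
        rw [poissonKernel, Complex.real_smul, ← mul_assoc, ← ofReal_mul]
        congr 2
        field_simp
        ring

theorem tendsto_integral_poissonKernel_mul (φ : BoundedContinuousFunction ℝ ℂ) :
    Tendsto (fun ε : ℝ => ∫ t, poissonKernel ε t * φ t) (𝓝[>] 0) (𝓝 (Real.pi * φ 0)) := by
  have hlim : Tendsto (fun ε : ℝ => ∫ s, ((1 + s ^ 2)⁻¹ : ℝ) * φ (ε * s)) (𝓝 0)
      (𝓝 (∫ s, ((1 + s ^ 2)⁻¹ : ℝ) * φ 0)) := by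
    refine tendsto_integral_filter_of_dominated_convergence (fun s => ‖φ‖ * (1 + s ^ 2)⁻¹)
      (.of_forall fun ε => ?_) (.of_forall fun ε => ae_of_all _ fun s => ?_)
      (integrable_inv_one_add_sq.const_mul _) (ae_of_all _ fun s => ?_)
    · exact (by fun_prop : Measurable fun s : ℝ =>
        (((1 + s ^ 2)⁻¹ : ℝ) : ℂ)).aestronglyMeasurable.mul
        (φ.continuous.comp (by fun_prop)).aestronglyMeasurable
    · rw [norm_mul, Complex.norm_real, Real.norm_eq_abs, abs_of_pos (by positivity), mul_comm]
      exact mul_le_mul_of_nonneg_right (φ.norm_coe_le_norm _) (by positivity)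
    · refine tendsto_const_nhds.mul ?_
      exact (by fun_prop : Continuous fun ε : ℝ => φ (ε * s)).tendsto' 0 (φ 0) (by simp)
  rw [integral_mul_const, integral_complex_ofReal, integral_univ_inv_one_add_sq] at hlim
  exact (hlim.mono_left nhdsWithin_le_nhds).congr'
    (eventually_mem_nhdsWithin.mono fun ε hε => (integral_poissonKernel_mul_eq hε).symm)

end SokhotskiPlemelj

end

open SokhotskiPlemelj

/-- Sokhotski–Plemelj: for a Schwartz function `φ` on `ℝ`, the principal value
`p.v.∫ φ(t)/t dt` exists, and
`lim_{ε→0⁺} ∫ φ(t)/(t-iε) dt = p.v.∫ φ(t)/t dt + iπ φ(0)`. -/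
theorem sokhotski_plemelj (φ : SchwartzMap ℝ ℂ) :
    ∃ P : ℂ,
      Tendsto (fun δ : ℝ => ∫ t in {t : ℝ | δ ≤ |t|}, φ t / (t : ℂ))
        (nhdsWithin 0 (Set.Ioi 0)) (nhds P) ∧
      Tendsto (fun ε : ℝ => ∫ t : ℝ, φ t / ((t : ℂ) - ε * Complex.I))
        (nhdsWithin 0 (Set.Ioi 0)) (nhds (P + Real.pi * Complex.I * φ 0)) := by
  have hψ := integrable_pvIntegrand φ.lipschitzWith φ.integrable
  refine ⟨∫ t, pvIntegrand φ t, tendsto_setIntegral_abs_ge_div φ.integrable hψ, ?_⟩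
  have hlim := (tendsto_integral_conjPoissonKernel_mul φ.integrable hψ).add
    ((tendsto_integral_poissonKernel_mul φ.toBoundedContinuousFunction).const_mul I)
  rw [show Real.pi * I * φ 0 = I * (Real.pi * φ.toBoundedContinuousFunction 0) by simp; ring]
  exact hlim.congr' (eventually_mem_nhdsWithin.mono fun ε hε =>
    (integral_div_ofReal_sub_mul_I φ.integrable hε).symm)
end
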